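/- arXiv:2208.13697 — 7 statements merged into one kernel-verified Lean document; each statement's English description precedes it below -/
import Mathlib

section
/- Let ψ be a G-invariant c-convex function on B, where G = S_{d+2} acts by permuting coordinates. If m ∈ σ_i° (the relative interior of the face σ_i of A opposite to vertex m_i, i.e. α_i = 0 < min_{j≠i} α_j), then every g ∈ G maximizing ⟨m, g(n)⟩ over G satisfies g(n) ∈ T_i = {n' ∈ B : β'_i = max_j β'_j}. -/
open Finset

/-- The pairing `⟨m,n⟩ = 1 − (d+2) Σ_j α_j β_j` in barycentric coordinates. -/
noncomputable def pairAB (d : ℕ) (α β : Fin (d + 2) → ℝ) : ℝ :=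
  1 - ((d : ℝ) + 2) * ∑ j, α j * β j

/-- Let `ψ` be a symmetric (S_{d+2}-invariant) function on `B`. If `m ∈ σ_i°`
(i.e. `α_i = 0 < α_j` for `j ≠ i`), then every permutation `g` maximizing
`⟨m, g(n)⟩` satisfies `g(n) ∈ T_i`, i.e. the `i`-th barycentric coordinate of
`g(n)` is maximal. Here `g(n)` has barycentric coordinates `j ↦ β(g⁻¹ j)`. -/
theorem maximizer_lands_in_Ti (d : ℕ) (hd : 1 ≤ d) (i : Fin (d + 2))
    (α β : Fin (d + 2) → ℝ)
    (hα0 : ∀ j, 0 ≤ α j) (hα1 : ∑ j, α j = 1)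
    (hβ0 : ∀ j, 0 ≤ β j) (hβ1 : ∑ j, β j = 1) (hβmin : ∃ j, β j = 0)
    (hσint : α i = 0 ∧ ∀ j, j ≠ i → 0 < α j)
    (ψ : (Fin (d + 2) → ℝ) → ℝ)
    (hψsym : ∀ g : Equiv.Perm (Fin (d + 2)), ∀ γ : Fin (d + 2) → ℝ, ψ (γ ∘ ⇑g) = ψ γ)
    (g : Equiv.Perm (Fin (d + 2)))
    (hgmax : ∀ h : Equiv.Perm (Fin (d + 2)),
      pairAB d α (fun j => β (h⁻¹ j)) ≤ pairAB d α (fun j => β (g⁻¹ j))) :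
    ∀ j, β (g⁻¹ j) ≤ β (g⁻¹ i) := by
  intro j
  by_contra hlt
  push_neg at hlt
  have hji : j ≠ i := by rintro rfl; exact lt_irrefl _ hlt
  set σ := Equiv.swap i j with hσ
  have hmax := hgmax (σ * g)
  unfold pairAB at hmax
  have hc : (0:ℝ) < (d:ℝ) + 2 := by positivity
  have hsum : ∑ k, α k * β (g⁻¹ k) ≤ ∑ k, α k * β ((σ * g)⁻¹ k) := by
    have h2 : ((d:ℝ) + 2) * ∑ k, α k * β (g⁻¹ k)
        ≤ ((d:ℝ) + 2) * ∑ k, α k * β ((σ * g)⁻¹ k) := by linarith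
    exact le_of_mul_le_mul_left h2 hc
  have hinv : ∀ k, (σ * g)⁻¹ k = g⁻¹ (σ k) := by
    intro k; simp [mul_inv_rev, Equiv.Perm.mul_apply, hσ]
  have reindex : ∑ k, α k * β (g⁻¹ (σ k)) = ∑ k, α (σ k) * β (g⁻¹ k) := by
    rw [← Equiv.sum_comp σ (fun k => α (σ k) * β (g⁻¹ k))]
    simp [hσ, Equiv.swap_apply_self]
  have split : ∀ f : Fin (d+2) → ℝ,
      ∑ k, f k = f i + f j + ∑ k ∈ ({i, j} : Finset (Fin (d+2)))ᶜ, f k := by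
    intro f
    rw [← Finset.sum_add_sum_compl ({i, j} : Finset (Fin (d+2))) f,
      Finset.sum_pair hji.symm]
  have hcompl : ∑ k ∈ ({i, j} : Finset (Fin (d+2)))ᶜ, α (σ k) * β (g⁻¹ k)
      = ∑ k ∈ ({i, j} : Finset (Fin (d+2)))ᶜ, α k * β (g⁻¹ k) := by
    refine Finset.sum_congr rfl fun k hk => ?_
    simp only [Finset.mem_compl, Finset.mem_insert, Finset.mem_singleton, not_or] at hk
    rw [hσ, Equiv.swap_apply_of_ne_of_ne hk.1 hk.2]
  have hσi : σ i = j := Equiv.swap_apply_left i j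
  have hσj : σ j = i := Equiv.swap_apply_right i j
  have hstrict : ∑ k, α (σ k) * β (g⁻¹ k) < ∑ k, α k * β (g⁻¹ k) := by
    rw [split (fun k => α (σ k) * β (g⁻¹ k)), split (fun k => α k * β (g⁻¹ k))]
    simp only [hσi, hσj, hσint.1]
    have hαj : 0 < α j := hσint.2 j hji
    have := hcompl
    nlinarith [hlt, hαj]
  have hRHS : ∑ k, α k * β ((σ * g)⁻¹ k) = ∑ k, α (σ k) * β (g⁻¹ k) := by
    simp only [hinv]; exact reindex
  rw [hRHS] at hsum
  linarith
end

section
/- For any m ∈ A and n ∈ B and any index i: if m lies in the face σ_i of A (i.e., α_i = 0), then there exists a permutation g maximizing ⟨m, g(n)⟩ over all permutations such that g(n) ∈ T_i (i.e., the i-th barycentric coordinate of g(n) is maximal among all coordinates). -/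
open Finset

/-- If `m ∈ σ_i` (i.e. `α_i = 0`), then there exists a permutation `g` maximizing
`⟨m, g(n)⟩` over all permutations such that `g(n) ∈ T_i`, that is, the `i`-th
barycentric coordinate of `g(n)` is maximal among all coordinates. Here `g(n)` has
barycentric coordinates `j ↦ β(g⁻¹ j)`. -/
theorem exists_maximizer_in_Ti (d : ℕ) (hd : 1 ≤ d) (i : Fin (d + 2))
    (α β : Fin (d + 2) → ℝ)
    (hα0 : ∀ j, 0 ≤ α j) (hα1 : ∑ j, α j = 1) (hαmin : ∃ j, α j = 0)
    (hβ0 : ∀ j, 0 ≤ β j) (hβ1 : ∑ j, β j = 1) (hβmin : ∃ j, β j = 0)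
    (hσ : α i = 0) :
    ∃ g : Equiv.Perm (Fin (d + 2)),
      (∀ h : Equiv.Perm (Fin (d + 2)),
        pairAB d α (fun j => β (h⁻¹ j)) ≤ pairAB d α (fun j => β (g⁻¹ j))) ∧
      ∀ j, β (g⁻¹ j) ≤ β (g⁻¹ i) := by
  obtain ⟨g, -, hg⟩ := Finset.exists_max_image Finset.univ
    (fun h : Equiv.Perm (Fin (d + 2)) => pairAB d α (fun j => β (h⁻¹ j)))
    ⟨1, Finset.mem_univ 1⟩
  obtain ⟨j0, -, hj0⟩ := Finset.exists_max_image Finset.univ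
    (fun j : Fin (d + 2) => β (g⁻¹ j)) ⟨i, Finset.mem_univ i⟩
  have hsw : ∀ j, ((Equiv.swap i j0 * g)⁻¹ : Equiv.Perm (Fin (d + 2))) j
      = g⁻¹ (Equiv.swap i j0 j) := by
    intro j; simp [mul_inv_rev, Equiv.Perm.mul_apply]
  refine ⟨Equiv.swap i j0 * g, ?_, ?_⟩
  · intro h
    refine le_trans (hg h (Finset.mem_univ h)) ?_
    have key : ∑ j, α j * β (g⁻¹ (Equiv.swap i j0 j)) ≤ ∑ j, α j * β (g⁻¹ j) := by
      rcases eq_or_ne i j0 with rfl | hij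
      · simp
      · have hdiff : ∑ j, (α j * β (g⁻¹ (Equiv.swap i j0 j)) - α j * β (g⁻¹ j)) ≤ 0 := by
          have hvan : ∀ j ∈ Finset.univ, j ∉ ({i, j0} : Finset (Fin (d + 2))) →
              α j * β (g⁻¹ (Equiv.swap i j0 j)) - α j * β (g⁻¹ j) = 0 := by
            intro j _ hj
            simp only [Finset.mem_insert, Finset.mem_singleton, not_or] at hj
            rw [Equiv.swap_apply_of_ne_of_ne hj.1 hj.2, sub_self]
          rw [← Finset.sum_subset (Finset.subset_univ ({i, j0} : Finset (Fin (d + 2)))) hvan,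
            Finset.sum_pair hij]
          have h1 : α i * β (g⁻¹ (Equiv.swap i j0 i)) - α i * β (g⁻¹ i) = 0 := by
            simp [hσ]
          have h2 : α j0 * β (g⁻¹ (Equiv.swap i j0 j0)) - α j0 * β (g⁻¹ j0) ≤ 0 := by
            rw [Equiv.swap_apply_right, sub_nonpos]
            exact mul_le_mul_of_nonneg_left (hj0 i (Finset.mem_univ i)) (hα0 j0)
          linarith
        rw [Finset.sum_sub_distrib] at hdiff
        linarith
    simp only [pairAB, hsw]
    have hc : (0 : ℝ) ≤ (d : ℝ) + 2 := by positivity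
    nlinarith [mul_le_mul_of_nonneg_left key hc]
  · intro j
    rw [hsw, hsw, Equiv.swap_apply_left]
    exact hj0 _ (Finset.mem_univ _)
end

section
/- Any convex function ψ: N_ℝ → ℝ with ψ = max_j ⟨m_j, ·⟩ + O(1) satisfies ψ^{cc} ≥ ψ on N_ℝ ∖ int(Δ^∨), and hence ψ^{cc} = ψ on B = ∂Δ^∨. -/
/-!
A subgradient `g` of `ψ` at `y` lies in `Δ`: since `ψ ≤ max_j ⟨m_j, ·⟩ + C`, the affine minorant
`ψ y + ⟨g, · - y⟩` forces `⟨g, w⟩ ≤ max_j ⟨m_j, w⟩` for every `w`. If `y ∉ int Δ^∨`, some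
`m_j ≠ 0` has `⟨m_j, y⟩ ≥ 1`; push `g` along `m_j` to the point `x = g + r m_j` where the ray
leaves `Δ`, so `x ∈ A`. As `⟨m_j, n⟩ ≤ 1` on `B ⊆ Δ^∨`, the subgradient inequality gives
`ψ^c(x) ≤ ⟨g, y⟩ - ψ(y) + r`, hence `ψ^{cc}(y) ≥ ⟨x, y⟩ - ψ^c(x) ≥ ψ(y) + r (⟨m_j, y⟩ - 1) ≥ ψ(y)`.
On `B` the reverse inequality `ψ^{cc} ≤ ψ` is formal.
-/

open Set
open scoped RealInnerProductSpace

theorem nonpos_of_forall_pos_mul_le {α : Type*} [Field α] [LinearOrder α] [IsStrictOrderedRing α]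
    {a b : α} (h : ∀ s, 0 < s → s * a ≤ b) : a ≤ 0 := by
  by_contra! ha
  have := h ((|b| + 1) / a) (by positivity)
  rw [div_mul_cancel₀ _ ha.ne'] at this
  linarith [le_abs_self b]

section

variable {V : Type*} [NormedAddCommGroup V] [InnerProductSpace ℝ V]

theorem ConvexOn.exists_subgradient [FiniteDimensional ℝ V] {ψ : V → ℝ}
    (hψ : ConvexOn ℝ univ ψ) (y : V) : ∃ g : V, ∀ x, ψ y + ⟪g, x - y⟫ ≤ ψ x := by
  have hcont : Continuous ψ := continuousOn_univ.1 (hψ.continuousOn isOpen_univ)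
  have hopen : IsOpen {p : V × ℝ | ψ p.1 < p.2} :=
    isOpen_lt (hcont.comp continuous_fst) continuous_snd
  have hconvex : Convex ℝ {p : V × ℝ | ψ p.1 < p.2} := by
    simpa using hψ.convex_strict_epigraph
  obtain ⟨f, hf⟩ := geometric_hahn_banach_open_point hconvex hopen
    (show (y, ψ y) ∉ {p : V × ℝ | ψ p.1 < p.2} from lt_irrefl (ψ y))
  set α := f (0, 1)
  set w := (InnerProductSpace.toDual ℝ V).symm (f.comp (ContinuousLinearMap.inl ℝ V ℝ))
  have hf_apply : ∀ v t, f (v, t) = ⟪w, v⟫ + t * α := fun v t => by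
    have hvt : ((v, t) : V × ℝ) = (v, 0) + t • ((0 : V), (1 : ℝ)) := by simp
    rw [hvt, map_add, map_smul, smul_eq_mul, InnerProductSpace.toDual_symm_apply]
    rfl
  have hα : 0 < -α := by
    have := hf (y, ψ y + 1) (by simp)
    rw [hf_apply, hf_apply] at this
    linarith
  refine ⟨(-α)⁻¹ • w, fun x => le_of_forall_gt fun t ht => ?_⟩
  have hsep := hf (x, t) ht
  rw [hf_apply, hf_apply] at hsep
  have : (-α)⁻¹ * ⟪w, x - y⟫ < t - ψ y := by
    rw [inv_mul_lt_iff₀ hα, inner_sub_right]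
    linarith
  rw [real_inner_smul_left]
  linarith

theorem IsCompact.exists_add_smul_mem_frontier {K : Set V} (hK : IsCompact K) {x v : V}
    (hx : x ∈ K) (hv : v ≠ 0) : ∃ r : ℝ, 0 ≤ r ∧ x + r • v ∈ frontier K := by
  have hray : Topology.IsClosedEmbedding fun r : ℝ => x + r • v :=
    (Homeomorph.addLeft x).isClosedEmbedding.comp (isClosedEmbedding_smul_left hv)
  set T := (fun r : ℝ => x + r • v) ⁻¹' K
  have hT : IsCompact T := hray.isCompact_preimage hK
  have h0 : (0 : ℝ) ∈ T := by simpa [T] using hx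
  refine ⟨sSup T, le_csSup hT.bddAbove h0, subset_closure (hT.sSup_mem ⟨0, h0⟩), fun hint => ?_⟩
  have hnhds : T ∈ nhds (sSup T) := Filter.mem_of_superset
    (hray.continuous.continuousAt.preimage_mem_nhds (isOpen_interior.mem_nhds hint))
    (preimage_mono interior_subset)
  obtain ⟨r, hrT, hr⟩ := Filter.nonempty_of_mem
    (Filter.inter_mem (nhdsWithin_le_nhds hnhds) (self_mem_nhdsWithin (s := Ioi (sSup T))))
  exact (le_csSup hT.bddAbove hrT).not_gt hr

variable {ι : Type*} {m : ι → V}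

theorem inner_le_iSup_inner_of_mem_convexHull [Finite ι] {x : V}
    (hx : x ∈ convexHull ℝ (range m)) (w : V) : ⟪x, w⟫ ≤ ⨆ i, ⟪m i, w⟫ := by
  refine convexHull_min ?_ (convex_halfSpace_le (f := fun a => ⟪a, w⟫)
    ⟨fun a b => inner_add_left a b w, fun c a => real_inner_smul_left a w c⟩ _) hx
  rintro _ ⟨i, rfl⟩
  exact le_ciSup (finite_range fun i => ⟪m i, w⟫).bddAbove i

theorem mem_convexHull_range_of_inner_le_iSup_inner [CompleteSpace V] [Finite ι] [Nonempty ι]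
    {g : V} (hg : ∀ w, ⟪g, w⟫ ≤ ⨆ i, ⟪m i, w⟫) : g ∈ convexHull ℝ (range m) := by
  by_contra hg_mem
  obtain ⟨f, u, hf, hfg⟩ := geometric_hahn_banach_closed_point (convex_convexHull ℝ _)
    ((finite_range m).isCompact_convexHull (𝕜 := ℝ)).isClosed hg_mem
  set w := (InnerProductSpace.toDual ℝ V).symm f
  have hw : ∀ x, ⟪x, w⟫ = f x := fun x => by
    rw [real_inner_comm, InnerProductSpace.toDual_symm_apply]
  have hsup : ⨆ i, ⟪m i, w⟫ ≤ u := ciSup_le fun i => by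
    rw [hw]
    exact (hf _ (subset_convexHull ℝ _ ⟨i, rfl⟩)).le
  have := hg w
  rw [hw] at this
  linarith

theorem inner_le_iSup_inner_of_subgradient {ψ : V → ℝ} {C : ℝ}
    (hψ : ∀ x, ψ x ≤ (⨆ i, ⟪m i, x⟫) + C) {g y : V}
    (hg : ∀ x, ψ y + ⟪g, x - y⟫ ≤ ψ x) (w : V) : ⟪g, w⟫ ≤ ⨆ i, ⟪m i, w⟫ := by
  suffices ⟪g, w⟫ - ⨆ i, ⟪m i, w⟫ ≤ 0 by linarith
  refine nonpos_of_forall_pos_mul_le (b := C + ⟪g, y⟫ - ψ y) fun s hs => ?_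
  have hsup : ⨆ i, ⟪m i, s • w⟫ = s * ⨆ i, ⟪m i, w⟫ := by
    simp only [real_inner_smul_right, Real.mul_iSup_of_nonneg hs.le]
  have := (hg (s • w)).trans (hψ (s • w))
  rw [hsup, inner_sub_right, real_inner_smul_right] at this
  linarith

theorem isClosed_setOf_forall_inner_le (m : ι → V) (c : ℝ) :
    IsClosed {x | ∀ i, ⟪m i, x⟫ ≤ c} := by
  rw [ofPred_forall]
  exact isClosed_iInter fun i => isClosed_le (by fun_prop) continuous_const

theorem exists_ne_zero_one_le_inner_of_notMem_interior [Finite ι] {y : V}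
    (hy : y ∉ interior {x | ∀ i, ⟪m i, x⟫ ≤ 1}) : ∃ i, m i ≠ 0 ∧ 1 ≤ ⟪m i, y⟫ := by
  by_contra! h
  refine hy (mem_interior_iff_mem_nhds.2 (Filter.eventually_all.2 fun i => ?_))
  by_cases hi : m i = 0
  · simp [hi]
  · exact ((continuous_const.inner continuous_id).continuousAt.eventually_lt
      continuousAt_const (h i hi)).mono fun x hx => hx.le

/-- In the paper's notation `ψ^c = cTransform B ψ` and `ψ^{cc} = cTransform A ψ^c`.
The supremum is a junk `0` when the family is empty or unbounded above. -/
noncomputable def cTransform (S : Set V) (f : V → ℝ) (x : V) : ℝ :=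
  ⨆ n : S, ⟪x, n⟫ - f n

theorem le_cTransform {S : Set V} {f : V → ℝ} {x n : V}
    (hbdd : BddAbove (range fun n : S => ⟪x, n⟫ - f n)) (hn : n ∈ S) :
    ⟪x, n⟫ - f n ≤ cTransform S f x :=
  le_ciSup (f := fun n : S => ⟪x, n⟫ - f n) hbdd ⟨n, hn⟩

theorem cTransform_le {S : Set V} {f : V → ℝ} {x : V} {c : ℝ} (hS : S.Nonempty)
    (h : ∀ n ∈ S, ⟪x, n⟫ - f n ≤ c) : cTransform S f x ≤ c :=
  have := hS.to_subtype
  ciSup_le fun n => h n n.2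

theorem cTransform_cTransform_le {S T : Set V} {f : V → ℝ} {y : V} (hT : T.Nonempty)
    (hbdd : ∀ x ∈ T, BddAbove (range fun n : S => ⟪x, n⟫ - f n)) (hy : y ∈ S) :
    cTransform T (cTransform S f) y ≤ f y :=
  cTransform_le hT fun x hx => by
    have := le_cTransform (hbdd x hx) hy
    rw [real_inner_comm]
    linarith

theorem bddAbove_range_inner_sub [Finite ι] {f : V → ℝ} {C : ℝ}
    (hf : ∀ n, (⨆ i, ⟪m i, n⟫) - C ≤ f n) {x : V} (hx : x ∈ convexHull ℝ (range m))
    (S : Set V) : BddAbove (range fun n : S => ⟪x, n⟫ - f n) := by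
  refine ⟨C, ?_⟩
  rintro _ ⟨n, rfl⟩
  linarith [inner_le_iSup_inner_of_mem_convexHull hx n, hf n]

theorem bddAbove_range_inner_sub_cTransform [Finite ι] {f : V → ℝ} {C : ℝ}
    (hf : ∀ n, (⨆ i, ⟪m i, n⟫) - C ≤ f n) {S T : Set V} (hT : T ⊆ convexHull ℝ (range m))
    {n₀ : V} (hn₀ : n₀ ∈ S) (z : V) :
    BddAbove (range fun x : T => ⟪z, x⟫ - cTransform S f x) := by
  refine ⟨(⨆ i, ⟪m i, z⟫) + (⨆ i, ⟪m i, -n₀⟫) + f n₀, ?_⟩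
  rintro _ ⟨⟨x, hx⟩, rfl⟩
  have hx_le := le_cTransform (bddAbove_range_inner_sub hf (hT hx) S) hn₀
  have := inner_le_iSup_inner_of_mem_convexHull (hT hx) (-n₀)
  rw [inner_neg_right] at this
  linarith [inner_le_iSup_inner_of_mem_convexHull (hT hx) z, real_inner_comm x z]

theorem exists_mem_frontier_le_inner_sub_cTransform [FiniteDimensional ℝ V] [Finite ι]
    {ψ : V → ℝ} {C : ℝ} (hψ : ConvexOn ℝ univ ψ) (hψC : ∀ x, ψ x ≤ (⨆ i, ⟪m i, x⟫) + C)
    {S : Set V} (hS : S ⊆ {x | ∀ i, ⟪m i, x⟫ ≤ 1}) (hS_ne : S.Nonempty)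
    {y : V} (hy : y ∉ interior {x | ∀ i, ⟪m i, x⟫ ≤ 1}) :
    ∃ x ∈ frontier (convexHull ℝ (range m)), ψ y ≤ ⟪x, y⟫ - cTransform S ψ x := by
  obtain ⟨j, hj, hjy⟩ := exists_ne_zero_one_le_inner_of_notMem_interior hy
  have : Nonempty ι := ⟨j⟩
  obtain ⟨g, hg⟩ := hψ.exists_subgradient y
  have hgΔ : g ∈ convexHull ℝ (range m) :=
    mem_convexHull_range_of_inner_le_iSup_inner (inner_le_iSup_inner_of_subgradient hψC hg)
  obtain ⟨r, hr, hx⟩ :=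
    ((finite_range m).isCompact_convexHull (𝕜 := ℝ)).exists_add_smul_mem_frontier hgΔ hj
  refine ⟨g + r • m j, hx, ?_⟩
  have hcT : cTransform S ψ (g + r • m j) ≤ ⟪g, y⟫ - ψ y + r := cTransform_le hS_ne fun n hn => by
    have := mul_le_mul_of_nonneg_left (hS hn j) hr
    rw [inner_add_left, real_inner_smul_left]
    linarith [hg n, inner_sub_right (𝕜 := ℝ) g n y]
  have := mul_le_mul_of_nonneg_left hjy hr
  rw [inner_add_left, real_inner_smul_left]
  linarith

end

/-- Extension property: any convex `ψ : N_ℝ → ℝ` with `ψ = max_j ⟨m_j,·⟩ + O(1)`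
satisfies `ψ^{cc} ≥ ψ` on `N_ℝ ∖ int(Δ^∨)`, and hence `ψ^{cc} = ψ` on `B = ∂Δ^∨`.
Here `Δ = conv(m_j)`, `Δ^∨` is its polar, `A = ∂Δ`, `B = ∂Δ^∨`,
`ψ^c(m) = sup_{n∈B}(⟨m,n⟩ − ψ(n))` and `ψ^{cc}(n) = sup_{m∈A}(⟨m,n⟩ − ψ^c(m))`. -/
theorem double_cTransform_extension {V : Type*} [NormedAddCommGroup V]
    [InnerProductSpace ℝ V] [FiniteDimensional ℝ V]
    (d : ℕ) (m : Fin (d + 2) → V)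
    (Δ : Set V) (hΔ : Δ = convexHull ℝ (Set.range m))
    (Dv : Set V) (hDv : Dv = {x | ∀ i, (inner ℝ (m i) x : ℝ) ≤ 1})
    (A : Set V) (hA : A = frontier Δ)
    (B : Set V) (hB : B = frontier Dv)
    (ψ : V → ℝ) (hconv : ConvexOn ℝ Set.univ ψ)
    (hgrowth : ∃ C, ∀ x, |ψ x - ⨆ i, (inner ℝ (m i) x : ℝ)| ≤ C)
    (ψc : V → ℝ) (hψc : ψc = fun x => ⨆ n : B, ((inner ℝ x (n : V) : ℝ) - ψ n))
    (ψcc : V → ℝ) (hψcc : ψcc = fun y => ⨆ x : A, ((inner ℝ (x : V) y : ℝ) - ψc x)) :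
    (∀ y ∉ interior Dv, ψ y ≤ ψcc y) ∧ ∀ y ∈ B, ψcc y = ψ y := by
  obtain ⟨C, hC⟩ := hgrowth
  have hψ_le : ∀ x, ψ x ≤ (⨆ i, ⟪m i, x⟫) + C := fun x => by linarith [(abs_le.1 (hC x)).2]
  have hψ_ge : ∀ x, (⨆ i, ⟪m i, x⟫) - C ≤ ψ x := fun x => by linarith [(abs_le.1 (hC x)).1]
  have hψcc' : ψcc = cTransform A (cTransform B ψ) := by
    subst hψcc hψc
    ext y
    simp only [cTransform, real_inner_comm]
  have hAΔ : A ⊆ Δ :=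
    hA ▸ hΔ ▸ ((finite_range m).isCompact_convexHull (𝕜 := ℝ)).isClosed.frontier_subset
  have hBDv : B ⊆ Dv := hB ▸ hDv ▸ (isClosed_setOf_forall_inner_le m 1).frontier_subset
  have hB_ne : ∀ y ∉ interior Dv, B.Nonempty := fun y hy =>
    hB ▸ nonempty_frontier_iff.2 ⟨⟨0, by simp [hDv]⟩, fun h => hy (by simp [h])⟩
  have key : ∀ y ∉ interior Dv, ∃ x ∈ A, ψ y ≤ ⟪x, y⟫ - cTransform B ψ x := fun y hy => by
    subst hΔ hDv hA
    exact exists_mem_frontier_le_inner_sub_cTransform hconv hψ_le hBDv (hB_ne y hy) hy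
  have part1 : ∀ y ∉ interior Dv, ψ y ≤ ψcc y := fun y hy => by
    obtain ⟨x, hx, hψx⟩ := key y hy
    obtain ⟨n₀, hn₀⟩ := hB_ne y hy
    rw [real_inner_comm] at hψx
    rw [hψcc']
    exact hψx.trans (le_cTransform
      (bddAbove_range_inner_sub_cTransform hψ_ge (hAΔ.trans hΔ.subset) hn₀ y) hx)
  refine ⟨part1, fun y hy => le_antisymm ?_ (part1 y (hB ▸ hy).2)⟩
  obtain ⟨x, hx, -⟩ := key y (hB ▸ hy).2
  rw [hψcc']
  exact cTransform_cTransform_le ⟨x, hx⟩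
    (fun x hx => bddAbove_range_inner_sub hψ_ge (hΔ ▸ hAΔ hx) B) hy
end

section
/- Let ψ: B → ℝ be continuous, m ∈ A, and suppose the c-subgradient ∂^c ψ^c(m) = {n} is a singleton. Then for any continuous v: B → ℝ, the function t ↦ (ψ + t v)^c(m) is differentiable at t = 0 with derivative −v(n). -/
/-!
Danskin's envelope theorem for the affine family `t ↦ a - t b` on a compact set `K`,
with `a = ⟨m, ·⟩ - ψ`, `b = v`, whose maximizer at `t = 0` is the unique point `n` of the
c-subgradient. If `x_t` maximizes `a - t b`, comparing with `n` on both sides gives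
`0 ≤ f(t) - f(0) + t b(n) ≤ t (b(n) - b(x_t))`, and by compactness `x_t` stays away from any
closed set avoiding `n` once `t` is small, so `b(x_t) → b(n)`.
-/

open Filter Topology Set

section Envelope

variable {X : Type*} [TopologicalSpace X] {K F : Set X} {a b : X → ℝ} {x₀ : X}

theorem eventually_forall_not_isMaxOn_sub_mul (hFK : F ⊆ K) (hF : IsCompact F)
    (ha : ContinuousOn a F) {C : ℝ} (hC : ∀ x ∈ K, |b x| ≤ C) (hx₀ : x₀ ∈ K)
    (hlt : ∀ x ∈ F, a x < a x₀) :
    ∀ᶠ t in 𝓝 (0 : ℝ), ∀ x ∈ F, ¬ IsMaxOn (fun x => a x - t * b x) K x := by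
  rcases F.eq_empty_or_nonempty with rfl | hF₀
  · exact Eventually.of_forall fun _ x hx => hx.elim
  obtain ⟨y, hyF, hy⟩ := hF.exists_isMaxOn hF₀ ha
  have hgap : 0 < a x₀ - a y := sub_pos.mpr (hlt y hyF)
  have hsmall : Tendsto (fun t : ℝ => |t| * (2 * C)) (𝓝 0) (𝓝 0) :=
    (continuous_abs.mul continuous_const).tendsto' 0 0 (by simp)
  filter_upwards [hsmall.eventually (gt_mem_nhds hgap)] with t ht x hxF hxmax
  have hbound : ∀ z ∈ K, |t * b z| ≤ |t| * C := fun z hz => by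
    rw [abs_mul]; exact mul_le_mul_of_nonneg_left (hC z hz) (abs_nonneg t)
  have hcmp : a x₀ - t * b x₀ ≤ a x - t * b x := hxmax hx₀
  have hxy : a x ≤ a y := hy hxF
  linarith [(abs_le.mp (hbound x₀ hx₀)).2, (abs_le.mp (hbound x (hFK hxF))).1]

theorem IsCompact.hasDerivAt_iSup_sub_mul (hK : IsCompact K) (ha : ContinuousOn a K)
    (hb : ContinuousOn b K) (hx₀ : x₀ ∈ K) (hmax : ∀ x ∈ K, x ≠ x₀ → a x < a x₀) :
    HasDerivAt (fun t : ℝ => ⨆ x : K, a x - t * b x) (-b x₀) 0 := by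
  obtain ⟨C, hC⟩ := hK.exists_bound_of_continuousOn hb
  have hmax₀ : IsMaxOn (fun x => a x - 0 * b x) K x₀ := isMaxOn_iff.mpr fun x hx => by
    rcases eq_or_ne x x₀ with rfl | hne
    · exact le_rfl
    · simpa using (hmax x hx hne).le
  rw [hasDerivAt_iff_isLittleO, Asymptotics.isLittleO_iff]
  intro c hc
  set F := K ∩ (fun x => |b x - b x₀|) ⁻¹' Ici c
  have hF : IsCompact F :=
    ((hb.sub continuousOn_const).abs).upperSemicontinuousOn.isCompact_inter_preimage_Ici hK c
  have hlt : ∀ x ∈ F, a x < a x₀ := fun x hx =>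
    hmax x hx.1 fun h => by simp [F, h] at hx; linarith
  filter_upwards [eventually_forall_not_isMaxOn_sub_mul inter_subset_left hF
    (ha.mono inter_subset_left) hC hx₀ hlt] with t ht
  obtain ⟨xt, hxt, hxtmax⟩ : ∃ xt ∈ K, IsMaxOn (fun x => a x - t * b x) K xt :=
    hK.exists_isMaxOn ⟨x₀, hx₀⟩ (ha.sub (continuousOn_const.mul hb))
  have hclose : |b xt - b x₀| ≤ c := by
    by_contra! h
    exact ht xt ⟨hxt, h.le⟩ hxtmax
  have hlow : a x₀ - t * b x₀ ≤ a xt - t * b xt := hxtmax hx₀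
  have hup : a xt ≤ a x₀ := by simpa using hmax₀ hxt
  rw [hxtmax.iSup_eq hxt, hmax₀.iSup_eq hx₀, Real.norm_eq_abs, Real.norm_eq_abs, sub_zero,
    zero_mul, sub_zero, smul_eq_mul, abs_le]
  have hdev : |t * (b x₀ - b xt)| ≤ c * |t| := by
    rw [abs_mul, abs_sub_comm, mul_comm]
    exact mul_le_mul_of_nonneg_right hclose (abs_nonneg t)
  constructor <;> linarith [abs_le.mp hdev, abs_nonneg t, mul_nonneg hc.le (abs_nonneg t)]

end Envelope

theorem cTransform_differentiable_at_zero_general {V : Type*} [NormedAddCommGroup V]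
    [InnerProductSpace ℝ V]
    (B : Set V)
    (hBcpt : IsCompact B)
    (ψ : V → ℝ) (hψcont : ContinuousOn ψ B)
    (ψc : V → ℝ) (hψc : ψc = fun x => ⨆ n : B, ((inner ℝ x (n : V) : ℝ) - ψ n))
    (m : V) (n : V)
    (hsing : {n' | n' ∈ B ∧ ψ n' + ψc m = (inner ℝ m n' : ℝ)} = {n})
    (v : V → ℝ) (hv : ContinuousOn v B) :
    HasDerivAt (fun t : ℝ => ⨆ n' : B, ((inner ℝ m (n' : V) : ℝ) - ψ n' - t * v n'))
      (-(v n)) 0 := by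
  obtain ⟨hnB, hn⟩ : n ∈ {n' | n' ∈ B ∧ ψ n' + ψc m = inner ℝ m n'} :=
    hsing ▸ mem_singleton n
  have ha : ContinuousOn (fun x => inner ℝ m x - ψ x) B :=
    (continuous_const.inner continuous_id).continuousOn.sub hψcont
  have hle : ∀ x ∈ B, inner ℝ m x - ψ x ≤ ψc m := fun x hx => by
    rw [hψc]
    exact le_ciSup (image_eq_range _ _ ▸ hBcpt.bddAbove_image ha) (⟨x, hx⟩ : B)
  have han : inner ℝ m n - ψ n = ψc m := by linarith
  refine hBcpt.hasDerivAt_iSup_sub_mul ha hv hnB fun x hx hxn =>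
    han ▸ (hle x hx).lt_of_ne fun heq => hxn ?_
  have hx_sub : x ∈ {n' | n' ∈ B ∧ ψ n' + ψc m = inner ℝ m n'} := ⟨hx, by linarith⟩
  rwa [hsing] at hx_sub

/-- If `ψ : B → ℝ` is continuous and c-convex, `m ∈ A`, and the c-subgradient
`∂^c ψ^c(m) = {n}` is a singleton, then for any continuous `v : B → ℝ`, the function
`t ↦ (ψ + t v)^c(m)` is differentiable at `t = 0` with derivative `−v(n)`. -/
theorem cTransform_differentiable_at_zero {V : Type*} [NormedAddCommGroup V]
    [InnerProductSpace ℝ V] [FiniteDimensional ℝ V]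
    (A B : Set V) (hAcpt : IsCompact A) (hAne : A.Nonempty)
    (hBcpt : IsCompact B) (hBne : B.Nonempty)
    (ψ : V → ℝ) (hψcont : ContinuousOn ψ B)
    (ψc : V → ℝ) (hψc : ψc = fun x => ⨆ n : B, ((inner ℝ x (n : V) : ℝ) - ψ n))
    (ψcc : V → ℝ) (hψcc : ψcc = fun y => ⨆ x : A, ((inner ℝ (x : V) y : ℝ) - ψc x))
    (hccvx : ∀ n ∈ B, ψcc n = ψ n)
    (m : V) (hm : m ∈ A) (n : V)
    (hsing : {n' | n' ∈ B ∧ ψ n' + ψc m = (inner ℝ m n' : ℝ)} = {n})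
    (v : V → ℝ) (hv : ContinuousOn v B) :
    HasDerivAt (fun t : ℝ => ⨆ n' : B, ((inner ℝ m (n' : V) : ℝ) - ψ n' - t * v n'))
      (-(v n)) 0 :=
  cTransform_differentiable_at_zero_general B hBcpt ψ hψcont ψc hψc m n hsing v hv
end

section
/- Suppose ψ₀, ψ₁ ∈ Q with ψ₀^c + ψ₁^c = 2ψ^c pointwise on A, where ψ = (ψ₀+ψ₁)/2 ∈ Q. If m ∈ A is such that ∂^c ψ^c(m) = {n} is a singleton, then ψ_i^c(m) = ⟨m,n⟩ − ψ_i(n) for i = 0, 1; in particular n ∈ ∂^c ψ₀^c(m) ∩ ∂^c ψ₁^c(m). -/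
variable {V : Type*} [NormedAddCommGroup V] [InnerProductSpace ℝ V]

/-- c-transform with respect to the compact set `B`: `f^c(x) = sup_{n∈B}(⟨x,n⟩ − f(n))`. -/
noncomputable def ctB (B : Set V) (f : V → ℝ) : V → ℝ :=
  fun x => ⨆ n : B, ((inner ℝ x (n : V) : ℝ) - f n)

/-- Double c-transform: `f^{cc}(y) = sup_{m∈A}(⟨m,y⟩ − f^c(m))`. -/
noncomputable def cctAB (A B : Set V) (f : V → ℝ) : V → ℝ :=
  fun y => ⨆ x : A, ((inner ℝ (x : V) y : ℝ) - ctB B f x)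

/-! Every c-convex `ψᵢ` satisfies the Fenchel–Young inequality `⟨m,n⟩ − ψᵢ(n) ≤ ψᵢ^c(m)`.
At the unique point `n` of `∂^c ψ^c(m)` the two inequalities add up to
`2⟨m,n⟩ − ψ₀(n) − ψ₁(n) = 2(⟨m,n⟩ − ψ(n)) = 2ψ^c(m) = ψ₀^c(m) + ψ₁^c(m)`,
so both are equalities. -/

/-- The `min 0` accounts for the junk value `0` of the supremum when it is unbounded. -/
lemma min_le_ctB {B : Set V} (f : V → ℝ) (x : V) {n₀ : V} (hn₀ : n₀ ∈ B) :
    min 0 (inner ℝ x n₀ - f n₀) ≤ ctB B f x := by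
  by_cases h : BddAbove (Set.range fun n : B => inner ℝ x (n : V) - f n)
  · exact (min_le_right _ _).trans (le_ciSup h ⟨n₀, hn₀⟩)
  · rw [ctB, Real.iSup_of_not_bddAbove h]
    exact min_le_left _ _

lemma IsCompact.bddBelow_image_ctB {A B : Set V} (hA : IsCompact A) (f : V → ℝ)
    {n₀ : V} (hn₀ : n₀ ∈ B) : BddBelow (ctB B f '' A) := by
  obtain ⟨c, hc⟩ := hA.bddBelow_image (f := fun x => inner ℝ x n₀)
    (continuous_id.inner continuous_const).continuousOn
  refine ⟨min 0 (c - f n₀), ?_⟩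
  rintro _ ⟨x, hx, rfl⟩
  have hcx : c ≤ inner ℝ x n₀ := hc ⟨x, hx, rfl⟩
  exact (min_le_min_left 0 (by linarith)).trans (min_le_ctB f x hn₀)

lemma inner_sub_ctB_le_cctAB {A B : Set V} (hA : IsCompact A) (f : V → ℝ)
    {n₀ : V} (hn₀ : n₀ ∈ B) {m : V} (hm : m ∈ A) (y : V) :
    inner ℝ m y - ctB B f m ≤ cctAB A B f y := by
  obtain ⟨c, hc⟩ := hA.bddAbove_image (f := fun x => inner ℝ x y)
    (continuous_id.inner continuous_const).continuousOn
  obtain ⟨d, hd⟩ := hA.bddBelow_image_ctB f hn₀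
  have hbdd : BddAbove (Set.range fun x : A => inner ℝ (x : V) y - ctB B f x) := by
    refine ⟨c - d, ?_⟩
    rintro _ ⟨⟨x, hx⟩, rfl⟩
    have hcx : inner ℝ x y ≤ c := hc ⟨x, hx, rfl⟩
    have hdx : d ≤ ctB B f x := hd ⟨x, hx, rfl⟩
    exact sub_le_sub hcx hdx
  exact le_ciSup hbdd ⟨m, hm⟩

lemma inner_sub_le_ctB_of_cctAB_eq {A B : Set V} (hA : IsCompact A) {f : V → ℝ}
    {m n : V} (hm : m ∈ A) (hn : n ∈ B) (hfn : cctAB A B f n = f n) :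
    inner ℝ m n - f n ≤ ctB B f m := by
  have := inner_sub_ctB_le_cctAB hA f hn hm n
  linarith

theorem average_cSubgradient_general {W : Type*} [NormedAddCommGroup W] [InnerProductSpace ℝ W]
    (A B : Set W) (hAcpt : IsCompact A)
    (ψ₀ ψ₁ : W → ℝ)
    (hQ₀ : ∀ n ∈ B, cctAB A B ψ₀ n = ψ₀ n)
    (hQ₁ : ∀ n ∈ B, cctAB A B ψ₁ n = ψ₁ n)
    (ψ : W → ℝ) (hψdef : ψ = fun n => (ψ₀ n + ψ₁ n) / 2)
    (hsum : ∀ m ∈ A, ctB B ψ₀ m + ctB B ψ₁ m = 2 * ctB B ψ m)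
    (m : W) (hm : m ∈ A) (n : W)
    (hsing : {n' | n' ∈ B ∧ ψ n' + ctB B ψ m = (inner ℝ m n' : ℝ)} = {n}) :
    ctB B ψ₀ m = (inner ℝ m n : ℝ) - ψ₀ n ∧ ctB B ψ₁ m = (inner ℝ m n : ℝ) - ψ₁ n := by
  obtain ⟨hnB, hψn⟩ : n ∈ B ∧ ψ n + ctB B ψ m = inner ℝ m n := by
    simpa using hsing.ge rfl
  have h₀ := inner_sub_le_ctB_of_cctAB_eq hAcpt hm hnB (hQ₀ n hnB)
  have h₁ := inner_sub_le_ctB_of_cctAB_eq hAcpt hm hnB (hQ₁ n hnB)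
  have hsum_m := hsum m hm
  subst hψdef
  constructor <;> linarith

/-- If `ψ₀, ψ₁ ∈ Q` with `ψ₀^c + ψ₁^c = 2ψ^c` on `A`, where `ψ = (ψ₀+ψ₁)/2 ∈ Q`, and
`m ∈ A` has c-subgradient `∂^c ψ^c(m) = {n}` a singleton, then
`ψᵢ^c(m) = ⟨m,n⟩ − ψᵢ(n)` for `i = 0, 1`. -/
theorem average_cSubgradient {W : Type*} [NormedAddCommGroup W] [InnerProductSpace ℝ W]
    [FiniteDimensional ℝ W]
    (A B : Set W) (hAcpt : IsCompact A) (hBcpt : IsCompact B)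
    (hAne : A.Nonempty) (hBne : B.Nonempty)
    (ψ₀ ψ₁ : W → ℝ)
    (hQ₀ : ∀ n ∈ B, cctAB A B ψ₀ n = ψ₀ n)
    (hQ₁ : ∀ n ∈ B, cctAB A B ψ₁ n = ψ₁ n)
    (ψ : W → ℝ) (hψdef : ψ = fun n => (ψ₀ n + ψ₁ n) / 2)
    (hψQ : ∀ n ∈ B, cctAB A B ψ n = ψ n)
    (hsum : ∀ m ∈ A, ctB B ψ₀ m + ctB B ψ₁ m = 2 * ctB B ψ m)
    (m : W) (hm : m ∈ A) (n : W)
    (hsing : {n' | n' ∈ B ∧ ψ n' + ctB B ψ m = (inner ℝ m n' : ℝ)} = {n}) :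
    ctB B ψ₀ m = (inner ℝ m n : ℝ) - ψ₀ n ∧ ctB B ψ₁ m = (inner ℝ m n : ℝ) - ψ₁ n :=
  average_cSubgradient_general A B hAcpt ψ₀ ψ₁ hQ₀ hQ₁ ψ hψdef hsum m hm n hsing
end

section
/- Let F: Q_sym → ℝ be defined by F(ψ) = ∫_A ψ^c dμ + ∫_B ψ dν, where ν is a symmetric positive measure on B of total mass μ(A). If ψ ∈ Q_sym satisfies (∂^c ψ^c)_* μ = ν (i.e., the pushforward of μ under the a.e.-defined c-gradient map of ψ^c equals ν), then ψ is a global minimizer of F over Q_sym. -/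
/-! The c-transform satisfies the Fenchel–Young inequality `⟨m, n⟩ ≤ ψ'^c m + ψ' n` for `n ∈ B`,
with equality at `n = g m` for `ψ` by hypothesis. Pulling `ν = g_* μ` back along `g` writes
`F ψ' = ∫ (ψ'^c m + ψ' (g m)) dμ`, so `F ψ = ∫ ⟨m, g m⟩ dμ ≤ F ψ'`. -/

open MeasureTheory

variable {V : Type*} [NormedAddCommGroup V] [InnerProductSpace ℝ V]

section CTransform

variable {B : Set V} {f : V → ℝ}

lemma bddAbove_range_inner_sub_s17 (hB : IsCompact B) (hf : ContinuousOn f B) (x : V) :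
    BddAbove (Set.range fun n : B => (inner ℝ x (n : V) : ℝ) - f n) := by
  have : CompactSpace B := isCompact_iff_compactSpace.mp hB
  rw [← Set.image_univ]
  exact isCompact_univ.bddAbove_image <|
    ((continuous_const.inner continuous_subtype_val).sub hf.domRestrict).continuousOn

lemma inner_le_ctB_add (hB : IsCompact B) (hf : ContinuousOn f B) (x : V) {n : V}
    (hn : n ∈ B) : (inner ℝ x n : ℝ) ≤ ctB B f x + f n := by
  have := le_ciSup (bddAbove_range_inner_sub_s17 hB hf x) ⟨n, hn⟩
  rw [ctB]
  linarith

lemma continuous_ctB (hB : IsCompact B) (hf : ContinuousOn f B) : Continuous (ctB B f) := by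
  have : CompactSpace B := isCompact_iff_compactSpace.mp hB
  have h := isCompact_univ.continuous_sSup (f := fun x (n : B) => (inner ℝ x (n : V) : ℝ) - f n)
    ((continuous_fst.inner (continuous_subtype_val.comp continuous_snd)).sub
      (hf.domRestrict.comp continuous_snd))
  simp only [Set.image_univ] at h
  exact h

end CTransform

lemma ContinuousOn.integrable_of_measure_compl_eq_zero {X : Type*}
    [TopologicalSpace X] [T2Space X] [MeasurableSpace X] [OpensMeasurableSpace X]
    {μ : Measure X} [IsFiniteMeasure μ] {K : Set X} {f : X → ℝ} (hf : ContinuousOn f K)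
    (hK : IsCompact K) (hμK : μ Kᶜ = 0) : Integrable f μ := by
  rw [← Measure.restrict_eq_self_of_ae_mem (ae_iff.mpr hμK)]
  exact hf.integrableOn_compact hK

section KantorovichFunctional

variable {W : Type*} [NormedAddCommGroup W] [InnerProductSpace ℝ W] [MeasurableSpace W]
  [BorelSpace W] {A B : Set W} {μ : Measure W} [IsFiniteMeasure μ] {g : W → W} {f : W → ℝ}

lemma integrable_ctB (hA : IsCompact A) (hB : IsCompact B) (hμA : μ Aᶜ = 0)
    (hf : ContinuousOn f B) : Integrable (ctB B f) μ :=
  (continuous_ctB hB hf).continuousOn.integrable_of_measure_compl_eq_zero hA hμA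

lemma integrable_ctB_add_comp (hA : IsCompact A) (hB : IsCompact B) (hμA : μ Aᶜ = 0)
    (hg : Measurable g) (hgB : μ.map g Bᶜ = 0) (hf : ContinuousOn f B) :
    Integrable (fun m => ctB B f m + f (g m)) μ :=
  (integrable_ctB hA hB hμA hf).add
    ((hf.integrable_of_measure_compl_eq_zero hB hgB).comp_measurable hg)

lemma integral_ctB_add_integral_map (hA : IsCompact A) (hB : IsCompact B) (hμA : μ Aᶜ = 0)
    (hg : Measurable g) (hgB : μ.map g Bᶜ = 0) (hf : ContinuousOn f B) :
    ∫ m, ctB B f m ∂μ + ∫ n, f n ∂μ.map g = ∫ m, ctB B f m + f (g m) ∂μ := by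
  have hf_map : Integrable f (μ.map g) := hf.integrable_of_measure_compl_eq_zero hB hgB
  rw [integral_map hg.aemeasurable hf_map.aestronglyMeasurable]
  exact (integral_add (integrable_ctB hA hB hμA hf) (hf_map.comp_measurable hg)).symm

end KantorovichFunctional

theorem cGradient_pushforward_implies_minimizer_general
    {W : Type*} [NormedAddCommGroup W] [InnerProductSpace ℝ W]
    [MeasurableSpace W] [BorelSpace W]
    (G : Type*) [Group G] [MulAction G W]
    (A B : Set W) (hAcpt : IsCompact A) (hBcpt : IsCompact B)
    (μ ν : Measure W) [IsFiniteMeasure μ]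
    (hμA : μ Aᶜ = 0) (hνB : ν Bᶜ = 0)
    (Qsym : Set (W → ℝ))
    (hQsym : Qsym = {f | ContinuousOn f B ∧ (∀ n ∈ B, cctAB A B f n = f n) ∧
      ∀ σ : G, ∀ x, f (σ • x) = f x})
    (F : (W → ℝ) → ℝ)
    (hF : F = fun f => (∫ m, ctB B f m ∂μ) + ∫ n, f n ∂ν)
    (ψ : W → ℝ) (hψ : ψ ∈ Qsym)
    (g : W → W) (hgmeas : Measurable g)
    (hg : ∀ᵐ m ∂μ, g m ∈ B ∧ ctB B ψ m + ψ (g m) = (inner ℝ m (g m) : ℝ))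
    (hpush : Measure.map g μ = ν) :
    ∀ ψ' ∈ Qsym, F ψ ≤ F ψ' := by
  intro ψ' hψ'
  subst hQsym hF hpush
  show ∫ m, ctB B ψ m ∂μ + ∫ n, ψ n ∂μ.map g ≤ ∫ m, ctB B ψ' m ∂μ + ∫ n, ψ' n ∂μ.map g
  rw [integral_ctB_add_integral_map hAcpt hBcpt hμA hgmeas hνB hψ.1,
    integral_ctB_add_integral_map hAcpt hBcpt hμA hgmeas hνB hψ'.1]
  refine integral_mono_ae (integrable_ctB_add_comp hAcpt hBcpt hμA hgmeas hνB hψ.1)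
    (integrable_ctB_add_comp hAcpt hBcpt hμA hgmeas hνB hψ'.1) ?_
  filter_upwards [hg] with m ⟨hgm, hψm⟩
  rw [hψm]
  exact inner_le_ctB_add hBcpt hψ'.1 m hgm

/-- If `ψ ∈ Q_sym` and the pushforward of `μ` under the a.e.-defined c-gradient map
`g = ∂^c ψ^c` equals the symmetric measure `ν` of mass `μ(A)`, then `ψ` is a global
minimizer of `F(ψ') = ∫_A ψ'^c dμ + ∫_B ψ' dν` over `Q_sym`. -/
theorem cGradient_pushforward_implies_minimizer
    {W : Type*} [NormedAddCommGroup W] [InnerProductSpace ℝ W] [FiniteDimensional ℝ W]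
    [MeasurableSpace W] [BorelSpace W]
    (G : Type*) [Group G] [MulAction G W]
    (A B : Set W) (hAcpt : IsCompact A) (hBcpt : IsCompact B)
    (hAne : A.Nonempty) (hBne : B.Nonempty)
    (μ ν : Measure W) [IsFiniteMeasure μ] [IsFiniteMeasure ν]
    (hμA : μ Aᶜ = 0) (hνB : ν Bᶜ = 0) (hmass : ν Set.univ = μ Set.univ)
    (hνsym : ∀ σ : G, Measure.map (fun x => σ • x) ν = ν)
    (Qsym : Set (W → ℝ))
    (hQsym : Qsym = {f | ContinuousOn f B ∧ (∀ n ∈ B, cctAB A B f n = f n) ∧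
      ∀ σ : G, ∀ x, f (σ • x) = f x})
    (F : (W → ℝ) → ℝ)
    (hF : F = fun f => (∫ m, ctB B f m ∂μ) + ∫ n, f n ∂ν)
    (ψ : W → ℝ) (hψ : ψ ∈ Qsym)
    (g : W → W) (hgmeas : Measurable g)
    (hg : ∀ᵐ m ∂μ, g m ∈ B ∧ ctB B ψ m + ψ (g m) = (inner ℝ m (g m) : ℝ))
    (hpush : Measure.map g μ = ν) :
    ∀ ψ' ∈ Qsym, F ψ ≤ F ψ' :=
  cGradient_pushforward_implies_minimizer_general G A B hAcpt hBcpt μ ν hμA hνB Qsym hQsym F hF ψ hψ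
    g hgmeas hg hpush
end

section
/- Let ψ: B → ℝ be symmetric (invariant under the S_{d+2}-action) and bounded. Then for m in the set S_i = {m ∈ A : α_i = max_j α_j}, the c-transform satisfies ψ^c(m) = sup_{n ∈ τ_i} (⟨m,n⟩ − ψ(n)), where τ_i = {n ∈ B : β_i = 0} is the facet of B opposite vertex n_i. -/
open Finset

/-- For a symmetric bounded `ψ : B → ℝ` and `m ∈ S_i` (i.e. `α_i = max_j α_j`), the
c-transform satisfies `ψ^c(m) = sup_{n ∈ τ_i} (⟨m,n⟩ − ψ(n))`, where
`τ_i = {n ∈ B : β_i = 0}`. Everything is written in barycentric coordinates, with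
pairing `⟨m,n⟩ = 1 − (d+2) Σ_j α_j β_j`. -/
theorem symmetric_cTransform_restricted_sup (d : ℕ) (hd : 1 ≤ d)
    (ψ : (Fin (d + 2) → ℝ) → ℝ)
    (hψsym : ∀ g : Equiv.Perm (Fin (d + 2)), ∀ β : Fin (d + 2) → ℝ, ψ (β ∘ ⇑g) = ψ β)
    (hψbdd : ∃ C, ∀ β, |ψ β| ≤ C)
    (Bset : Set (Fin (d + 2) → ℝ))
    (hBset : Bset = {β | (∀ j, 0 ≤ β j) ∧ (∑ j, β j) = 1 ∧ ∃ j, β j = 0})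
    (i : Fin (d + 2))
    (τ : Set (Fin (d + 2) → ℝ)) (hτ : τ = {β ∈ Bset | β i = 0})
    (α : Fin (d + 2) → ℝ) (hα0 : ∀ j, 0 ≤ α j) (hα1 : ∑ j, α j = 1)
    (hαmin : ∃ j, α j = 0) (hαmax : ∀ j, α j ≤ α i) :
    (⨆ β : Bset, ((1 - ((d : ℝ) + 2) * ∑ j, α j * (β : Fin (d + 2) → ℝ) j) - ψ β))
      = ⨆ β : τ, ((1 - ((d : ℝ) + 2) * ∑ j, α j * (β : Fin (d + 2) → ℝ) j) - ψ β) := by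
  obtain ⟨C, hC⟩ := hψbdd
  set f : (Fin (d + 2) → ℝ) → ℝ :=
    fun β => (1 - ((d : ℝ) + 2) * ∑ j, α j * β j) - ψ β with hf
  have hτB : τ ⊆ Bset := by rw [hτ]; exact fun β hβ => hβ.1
  -- a witness in τ
  obtain ⟨j₀, hj₀⟩ := exists_ne i
  have hwit : (fun j => if j = j₀ then (1:ℝ) else 0) ∈ τ := by
    rw [hτ, hBset]
    refine ⟨⟨fun j => by positivity, ?_, ⟨i, by simp [hj₀.symm]⟩⟩, by simp [hj₀.symm]⟩
    simp
  have hτne : Nonempty τ := ⟨⟨_, hwit⟩⟩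
  have hBne : Nonempty Bset := ⟨⟨_, hτB hwit⟩⟩
  -- uniform upper bound
  have hbound : ∀ β ∈ Bset, f β ≤ 1 + C := by
    intro β hβ
    rw [hBset] at hβ
    obtain ⟨hβ0, hβ1, -⟩ := hβ
    have h1 : (0:ℝ) ≤ ∑ j, α j * β j :=
      Finset.sum_nonneg fun j _ => mul_nonneg (hα0 j) (hβ0 j)
    have h2 : -ψ β ≤ C := by have := abs_le.mp (hC β); linarith [this.1]
    have h3 : (0:ℝ) ≤ ((d : ℝ) + 2) * ∑ j, α j * β j := by positivity
    simp only [hf]; linarith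
  have hbddτ : BddAbove (Set.range fun β : τ => f (β : Fin (d + 2) → ℝ)) := by
    refine ⟨1 + C, ?_⟩
    rintro x ⟨β, rfl⟩
    exact hbound _ (hτB β.2)
  have hbddB : BddAbove (Set.range fun β : Bset => f (β : Fin (d + 2) → ℝ)) := by
    refine ⟨1 + C, ?_⟩
    rintro x ⟨β, rfl⟩
    exact hbound _ β.2
  apply le_antisymm
  · apply ciSup_le
    rintro ⟨β, hβ⟩
    have hβ' := hβ
    rw [hBset] at hβ'
    obtain ⟨hβ0, hβ1, k, hk⟩ := hβ'
    set g := Equiv.swap i k with hg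
    set β' : Fin (d + 2) → ℝ := β ∘ ⇑g with hβ'def
    have hβ'i : β' i = 0 := by simp [hβ'def, hg, Equiv.swap_apply_left, hk]
    have hβ'sum : ∑ j, β' j = 1 := by
      rw [hβ'def]; rw [show (∑ j, (β ∘ ⇑g) j) = ∑ j, β (g j) from rfl]
      rw [Equiv.sum_comp g β]; exact hβ1
    have hβ'mem : β' ∈ τ := by
      rw [hτ]
      refine ⟨?_, hβ'i⟩
      rw [hBset]
      exact ⟨fun j => hβ0 _, hβ'sum, ⟨i, hβ'i⟩⟩
    have hsum_le : ∑ j, α j * β' j ≤ ∑ j, α j * β j := by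
      have hreidx : ∑ j, α j * β' j = ∑ j, α (g j) * β j := by
        refine Fintype.sum_equiv g _ _ fun j => ?_
        simp [hβ'def, hg, Equiv.swap_apply_self]
      rw [hreidx]
      refine Finset.sum_le_sum fun j _ => ?_
      rcases eq_or_ne j i with rfl | hji
      · rw [hg, Equiv.swap_apply_left]
        exact mul_le_mul_of_nonneg_right (hαmax k) (hβ0 j)
      · rcases eq_or_ne j k with rfl | hjk
        · rw [hk, mul_zero, mul_zero]
        · rw [hg, Equiv.swap_apply_of_ne_of_ne hji hjk]
    have hψeq : ψ β' = ψ β := hψsym g β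
    have hle : f β ≤ f β' := by
      simp only [hf, hψeq]
      have : ((d:ℝ) + 2) * ∑ j, α j * β' j ≤ ((d:ℝ) + 2) * ∑ j, α j * β j := by
        apply mul_le_mul_of_nonneg_left hsum_le; positivity
      linarith
    exact le_trans hle (le_ciSup hbddτ ⟨β', hβ'mem⟩)
  · apply ciSup_le
    rintro ⟨β, hβ⟩
    exact le_ciSup hbddB ⟨β, hτB hβ⟩
end
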